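/- arXiv:1911.07336 — 2 statements merged into one kernel-verified Lean document; each statement's English description precedes it below -/
import Mathlib

section
/- For nonempty measurable subsets A, B of the circle group S^1 with Haar probability measure μ, the inner measure of the product set A·B satisfies μ*(A·B) ≥ min(1, μ(A) + μ(B)). -/
open MeasureTheory Pointwise Metric Set
open scoped ENNReal NNReal

noncomputable instance : MeasurableSpace Circle := borel Circle
instance : BorelSpace Circle := ⟨rfl⟩

namespace KempermanAux

local notation "𝕋" => AddCircle (1:ℝ)

instance : IsProbabilityMeasure (volume : Measure 𝕋) :=
  ⟨by rw [AddCircle.measure_univ]; norm_num⟩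

lemma coe_int_eq_zero (n : ℤ) : ((n : ℝ) : 𝕋) = 0 := by
  rw [AddCircle.coe_eq_zero_iff]
  exact ⟨n, by simp⟩

lemma coe_add' (x y : ℝ) : ((x + y : ℝ) : 𝕋) = (x : 𝕋) + (y : 𝕋) := rfl

lemma coe_sub' (x y : ℝ) : ((x - y : ℝ) : 𝕋) = (x : 𝕋) - (y : 𝕋) := rfl

lemma coe_add_int (x : ℝ) (n : ℤ) : ((x + n : ℝ) : 𝕋) = (x : 𝕋) := by
  rw [coe_add', coe_int_eq_zero, add_zero]

lemma coe_eq_of_sub_int (x y : ℝ) (n : ℤ) (h : x = y + n) : (x : 𝕋) = (y : 𝕋) := by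
  rw [h, coe_add_int]

lemma norm_coe_le (x : ℝ) : ‖(x : 𝕋)‖ ≤ |x| := by
  simpa using (QuotientAddGroup.norm_mk_le_norm : ‖((x : ℝ) : ℝ ⧸ AddSubgroup.zmultiples (1:ℝ))‖ ≤ ‖x‖)

lemma norm_coe_eq (x : ℝ) : ‖(x : 𝕋)‖ = |x - round x| := by
  simpa using AddCircle.norm_eq (p := (1:ℝ)) (x := x)

/-- Every element of the circle has a representative of absolute value equal to the norm. -/
lemma exists_rep (w : 𝕋) : ∃ s : ℝ, (s : 𝕋) = w ∧ |s| = ‖w‖ := by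
  induction w using QuotientAddGroup.induction_on with
  | H z =>
    refine ⟨z - round z, ?_, (norm_coe_eq z).symm⟩
    exact coe_eq_of_sub_int _ _ (-(round z)) (by push_cast; ring)

/-- The grid points `k/p` in the circle. -/
noncomputable def grd (p : ℕ) (k : ZMod p) : 𝕋 := (((k.val : ℝ) / p : ℝ) : 𝕋)

lemma grd_add {p : ℕ} [NeZero p] (k l : ZMod p) : grd p (k + l) = grd p k + grd p l := by
  have hp : (p : ℝ) ≠ 0 := Nat.cast_ne_zero.mpr (NeZero.ne p)
  obtain ⟨q, hq⟩ : ∃ q : ℕ, k.val + l.val = (k + l).val + p * q := by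
    refine ⟨(k.val + l.val) / p, ?_⟩
    rw [ZMod.val_add]
    exact (Nat.mod_add_div _ _).symm
  have hR : (k.val : ℝ) + (l.val : ℝ) = ((k + l).val : ℝ) + (p : ℝ) * (q : ℝ) := by
    exact_mod_cast hq
  unfold grd
  rw [← coe_add']
  refine (coe_eq_of_sub_int _ _ (q : ℤ) ?_).symm
  rw [← add_div, hR, add_div, mul_comm, mul_div_assoc, div_self hp, mul_one]
  push_cast
  ring

lemma grd_dense {p : ℕ} [NeZero p] (x : 𝕋) :
    ∃ k : ZMod p, dist x (grd p k) ≤ 1 / (2 * p) := by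
  have hp : (p : ℝ) ≠ 0 := Nat.cast_ne_zero.mpr (NeZero.ne p)
  have hp0 : 0 < (p : ℝ) := Nat.cast_pos.mpr (Nat.pos_of_ne_zero (NeZero.ne p))
  induction x using QuotientAddGroup.induction_on with
  | H z =>
    set y : ℝ := Int.fract z with hy
    have hy0 : 0 ≤ y := Int.fract_nonneg z
    have hyz : ((y : ℝ) : 𝕋) = (z : 𝕋) := by
      refine coe_eq_of_sub_int _ _ (-⌊z⌋) ?_
      rw [hy, Int.fract]
      push_cast
      ring
    set n : ℤ := round ((p : ℝ) * y) with hn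
    have habs : |(p : ℝ) * y - n| ≤ 1 / 2 := abs_sub_round _
    have hn0 : 0 ≤ n := by
      have hpy : 0 ≤ (p : ℝ) * y := by positivity
      have h2 : ((p : ℝ) * y) - n ≤ 1 / 2 := (abs_le.mp habs).2
      have hlow : (-1 : ℝ) < (n : ℝ) := by linarith
      have : (-1 : ℤ) < n := by exact_mod_cast hlow
      omega
    set n₀ : ℕ := n.toNat with hn₀
    have hnn₀ : ((n₀ : ℕ) : ℝ) = (n : ℝ) := by exact_mod_cast Int.toNat_of_nonneg hn0
    refine ⟨(n₀ : ZMod p), ?_⟩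
    have hval : ((n₀ : ZMod p)).val = n₀ % p := ZMod.val_natCast p n₀
    obtain ⟨q, hq⟩ : ∃ q : ℕ, n₀ = n₀ % p + p * q := ⟨n₀ / p, (Nat.mod_add_div _ _).symm⟩
    have hRn : (n₀ : ℝ) = ((n₀ % p : ℕ) : ℝ) + (p : ℝ) * (q : ℝ) := by exact_mod_cast hq
    have hkey : ((y - ((((n₀ : ZMod p)).val : ℝ) / p) : ℝ) : 𝕋)
        = ((y - (n₀ : ℝ) / p : ℝ) : 𝕋) := by
      rw [hval]
      refine (coe_eq_of_sub_int _ _ (q : ℤ) ?_)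
      rw [hRn, add_div, mul_comm, mul_div_assoc, div_self hp, mul_one]
      push_cast
      ring
    have hdist : dist ((z : ℝ) : 𝕋) (grd p ((n₀ : ZMod p)))
        = ‖((y - ((((n₀ : ZMod p)).val : ℝ) / p) : ℝ) : 𝕋)‖ := by
      rw [dist_eq_norm, ← hyz, grd, ← coe_sub']
    rw [hdist, hkey]
    calc ‖((y - (n₀ : ℝ) / p : ℝ) : 𝕋)‖ ≤ |y - (n₀ : ℝ) / p| := norm_coe_le _
      _ ≤ 1 / (2 * p) := by
          have heq : y - (n₀ : ℝ) / p = ((p : ℝ) * y - n) / p := by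
            rw [hnn₀] at *
            field_simp
          rw [heq, abs_div, abs_of_pos hp0, div_le_div_iff₀ hp0 (by positivity)]
          nlinarith [abs_nonneg ((p : ℝ) * y - n)]

lemma grd_sep {p : ℕ} [NeZero p] {k l : ZMod p} (h : k ≠ l) :
    1 / (p : ℝ) ≤ dist (grd p k) (grd p l) := by
  have hp0 : 0 < (p : ℝ) := Nat.cast_pos.mpr (Nat.pos_of_ne_zero (NeZero.ne p))
  have hdist : dist (grd p k) (grd p l)
      = ‖((((k.val : ℝ) - l.val) / p : ℝ) : 𝕋)‖ := by
    rw [grd, grd, dist_eq_norm, ← coe_sub', div_sub_div_same]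
  rw [hdist, norm_coe_eq]
  set x : ℝ := ((k.val : ℝ) - l.val) / p with hx
  set m : ℤ := round x with hm
  have hne : ((k.val : ℤ) - l.val) - p * m ≠ 0 := by
    intro hcon
    have hdvd : (p : ℤ) ∣ ((k.val : ℤ) - l.val) := ⟨m, by linarith⟩
    have h1 : (k.val : ℤ) < p := by exact_mod_cast ZMod.val_lt k
    have h2 : (l.val : ℤ) < p := by exact_mod_cast ZMod.val_lt l
    have hbound : |((k.val : ℤ) - l.val)| < p := by rw [abs_lt]; omega
    have hzero : ((k.val : ℤ) - l.val) = 0 := Int.eq_zero_of_abs_lt_dvd hdvd hbound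
    have : k.val = l.val := by omega
    exact h (ZMod.val_injective p this)
  have h1le : (1 : ℝ) ≤ |((k.val : ℝ) - l.val) - p * m| := by
    have hcast : ((((k.val : ℤ) - l.val) - p * m : ℤ) : ℝ)
        = ((k.val : ℝ) - l.val) - p * m := by push_cast; ring
    rw [← hcast]
    exact_mod_cast Int.one_le_abs hne
  have heq : x - m = (((k.val : ℝ) - l.val) - p * m) / p := by
    rw [hx]; field_simp
  rw [heq, abs_div, abs_of_pos hp0, div_le_div_iff₀ hp0 hp0]
  nlinarith

lemma volume_ball_grd {p : ℕ} (hp1 : 1 ≤ p) (x : 𝕋) :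
    volume (ball x (1 / (2 * p))) = ENNReal.ofReal (1 / p) := by
  have hp0 : 0 < (p : ℝ) := by exact_mod_cast hp1
  rw [← measure_congr (AddCircle.closedBall_ae_eq_ball), AddCircle.volume_closedBall]
  congr 1
  have h2 : 2 * (1 / (2 * (p : ℝ))) = 1 / p := by field_simp
  rw [h2, inf_eq_right.mpr]
  rw [div_le_one hp0]
  exact_mod_cast hp1

/-- Kemperman's theorem for compact subsets of the additive circle. -/
theorem kemp_add (K L : Set 𝕋) (hK : IsCompact K) (hL : IsCompact L)
    (hKne : K.Nonempty) (hLne : L.Nonempty) :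
    min 1 (volume K + volume L) ≤ volume (K + L) := by
  classical
  have hKL : IsCompact (K + L) := hK.add hL
  rw [show volume (K + L) = ⨅ (U : Set 𝕋) (_ : K + L ⊆ U) (_ : IsOpen U), volume U from
    Set.measure_eq_iInf_isOpen _ _]
  simp only [le_iInf_iff]
  intro U hsub hUo
  obtain ⟨V, hV, hVsub⟩ := compact_open_separated_add_right hKL hUo hsub
  -- find δ > 0 such that reals of absolute value ≤ δ map into V
  obtain ⟨δ, hδpos, hδ⟩ : ∃ δ > 0, ∀ r : ℝ, |r| ≤ δ → ((r : ℝ) : 𝕋) ∈ V := by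
    have hcont : Continuous ((↑) : ℝ → 𝕋) := AddCircle.continuous_mk' 1
    have hmem : ((↑) : ℝ → 𝕋) ⁻¹' V ∈ nhds (0 : ℝ) := by
      apply hcont.continuousAt.preimage_mem_nhds
      simpa using hV
    obtain ⟨ε, hε, hball⟩ := Metric.mem_nhds_iff.mp hmem
    refine ⟨ε / 2, by positivity, fun r hr => ?_⟩
    apply hball
    simp only [mem_ball, dist_zero_right, Real.norm_eq_abs]
    linarith
  refine ENNReal.le_of_forall_pos_le_add fun ε hε _ => ?_
  -- choose a large prime p
  obtain ⟨p, hple, hpp⟩ :=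
    Nat.exists_infinite_primes (max ⌈2 / δ⌉₊ ⌈((ε : ℝ))⁻¹⌉₊ + 1)
  haveI : NeZero p := ⟨hpp.ne_zero⟩
  have hp1 : 1 ≤ p := hpp.one_lt.le
  have hp0 : 0 < (p : ℝ) := by exact_mod_cast hpp.pos
  have hmax1 : (⌈2 / δ⌉₊ : ℕ) ≤ p := le_trans (le_trans (le_max_left _ _) (Nat.le_succ _)) hple
  have hmax2 : (⌈((ε : ℝ))⁻¹⌉₊ : ℕ) ≤ p :=
    le_trans (le_trans (le_max_right _ _) (Nat.le_succ _)) hple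
  have hpδ : 2 / δ ≤ (p : ℝ) := by
    calc 2 / δ ≤ (⌈2 / δ⌉₊ : ℝ) := Nat.le_ceil _
      _ ≤ p := by exact_mod_cast hmax1
  have hpε : (1 : ℝ) / p ≤ (ε : ℝ) := by
    have hεpos : (0 : ℝ) < ε := hε
    have h1 : ((ε : ℝ))⁻¹ ≤ (p : ℝ) := by
      calc ((ε : ℝ))⁻¹ ≤ (⌈((ε : ℝ))⁻¹⌉₊ : ℝ) := Nat.le_ceil _
        _ ≤ p := by exact_mod_cast hmax2
    rw [div_le_iff₀ hp0]
    calc (1 : ℝ) = (ε : ℝ) * ((ε : ℝ))⁻¹ := (mul_inv_cancel₀ hεpos.ne').symm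
      _ ≤ (ε : ℝ) * p := by nlinarith
  set r : ℝ := 1 / (2 * p) with hr
  have hrpos : 0 < r := by positivity
  set q : ℝ≥0∞ := ENNReal.ofReal (1 / p) with hq
  -- the discretizations
  set A : Finset (ZMod p) :=
    Finset.univ.filter (fun k => (closedBall (grd p k) r ∩ K).Nonempty) with hA
  set B : Finset (ZMod p) :=
    Finset.univ.filter (fun k => (closedBall (grd p k) r ∩ L).Nonempty) with hB
  have hcover : ∀ (S : Set 𝕋) (F : Finset (ZMod p)),
      (F = Finset.univ.filter (fun k => (closedBall (grd p k) r ∩ S).Nonempty)) →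
      volume S ≤ F.card * q := by
    intro S F hF
    have hSsub : S ⊆ ⋃ k ∈ F, closedBall (grd p k) r := by
      intro x hx
      obtain ⟨k, hk⟩ := grd_dense (p := p) x
      have hxk : x ∈ closedBall (grd p k) r := by
        rwa [mem_closedBall]
      have hkF : k ∈ F := by
        rw [hF, Finset.mem_filter]
        exact ⟨Finset.mem_univ _, ⟨x, hxk, hx⟩⟩
      exact Set.mem_biUnion hkF hxk
    calc volume S ≤ volume (⋃ k ∈ F, closedBall (grd p k) r) := measure_mono hSsub
      _ ≤ ∑ k ∈ F, volume (closedBall (grd p k) r) := measure_biUnion_finset_le F _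
      _ = F.card * q := by
          rw [Finset.sum_congr rfl (fun k _ => ?_), Finset.sum_const, nsmul_eq_mul]
          rw [measure_congr (AddCircle.closedBall_ae_eq_ball), volume_ball_grd hp1]
  have hAK : volume K ≤ A.card * q := hcover K A hA
  have hBL : volume L ≤ B.card * q := hcover L B hB
  have hnonempty : ∀ (S : Set 𝕋) (F : Finset (ZMod p)),
      (F = Finset.univ.filter (fun k => (closedBall (grd p k) r ∩ S).Nonempty)) →
      S.Nonempty → F.Nonempty := by
    intro S F hF ⟨x, hx⟩
    obtain ⟨k, hk⟩ := grd_dense (p := p) x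
    exact ⟨k, by rw [hF, Finset.mem_filter]; exact ⟨Finset.mem_univ _, ⟨x, by rwa [mem_closedBall], hx⟩⟩⟩
  have hAne : A.Nonempty := hnonempty K A hA hKne
  have hBne : B.Nonempty := hnonempty L B hB hLne
  -- the balls around grid points of A + B are inside U
  have hballU : ∀ m ∈ A + B, ball (grd p m) r ⊆ U := by
    intro m hm
    obtain ⟨k, hk, l, hl, rfl⟩ := Finset.mem_add.mp hm
    rw [hA, Finset.mem_filter] at hk
    rw [hB, Finset.mem_filter] at hl
    obtain ⟨a, ha, haK⟩ := hk.2
    obtain ⟨b, hb, hbL⟩ := hl.2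
    intro y hy
    have hnorm : ‖y - (a + b)‖ ≤ 3 * r := by
      have h1 : ‖y - grd p (k + l)‖ < r := by
        rw [← dist_eq_norm]; exact mem_ball.mp hy
      have h2 : ‖grd p k - a‖ ≤ r := by
        rw [← dist_eq_norm, dist_comm]; exact mem_closedBall.mp ha
      have h3 : ‖grd p l - b‖ ≤ r := by
        rw [← dist_eq_norm, dist_comm]; exact mem_closedBall.mp hb
      have heq : y - (a + b) = (y - grd p (k + l)) + (grd p k - a) + (grd p l - b) := by
        rw [grd_add]; abel
      rw [heq]
      calc ‖(y - grd p (k + l)) + (grd p k - a) + (grd p l - b)‖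
          ≤ ‖(y - grd p (k + l)) + (grd p k - a)‖ + ‖grd p l - b‖ := norm_add_le _ _
        _ ≤ ‖y - grd p (k + l)‖ + ‖grd p k - a‖ + ‖grd p l - b‖ := by
            have := norm_add_le (y - grd p (k + l)) (grd p k - a); linarith
        _ ≤ 3 * r := by linarith
    obtain ⟨s, hs, hsnorm⟩ := exists_rep (y - (a + b))
    have hsδ : |s| ≤ δ := by
      rw [hsnorm]
      calc ‖y - (a + b)‖ ≤ 3 * r := hnorm
        _ ≤ δ := by
            rw [hr]
            rw [div_le_iff₀ hδpos] at hpδ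
            rw [mul_one_div, div_le_iff₀ (by positivity : (0:ℝ) < 2 * p)]
            nlinarith
    have hyV : y - (a + b) ∈ V := hs ▸ hδ s hsδ
    have : y = (a + b) + (y - (a + b)) := by abel
    rw [this]
    exact hVsub (Set.add_mem_add (Set.add_mem_add haK hbL) hyV)
  -- the balls are pairwise disjoint
  have hdisj : ((A + B : Finset (ZMod p)) : Set (ZMod p)).PairwiseDisjoint
      (fun m => ball (grd p m) r) := by
    intro m _ m' _ hne
    apply ball_disjoint_ball
    rw [hr]
    calc (1 : ℝ) / (2 * p) + 1 / (2 * p) = 2 * 1 / (2 * p) := by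
          rw [← add_div]; norm_num
      _ = 1 / p := mul_div_mul_left 1 (p : ℝ) two_ne_zero
      _ ≤ dist (grd p m) (grd p m') := grd_sep hne
  have hUge : ((A + B).card : ℝ≥0∞) * q ≤ volume U := by
    have hsub2 : (⋃ m ∈ (A + B), ball (grd p m) r) ⊆ U := by
      intro x hx
      simp only [Set.mem_iUnion, exists_prop] at hx
      obtain ⟨m, hm, hxm⟩ := hx
      exact hballU m hm hxm
    calc ((A + B).card : ℝ≥0∞) * q
        = ∑ m ∈ (A + B), volume (ball (grd p m) r) := by
          rw [Finset.sum_congr rfl (fun m _ => volume_ball_grd hp1 _), Finset.sum_const,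
            nsmul_eq_mul]
      _ = volume (⋃ m ∈ (A + B), ball (grd p m) r) :=
          (measure_biUnion_finset hdisj (fun m _ => measurableSet_ball)).symm
      _ ≤ volume U := measure_mono hsub2
  -- Cauchy-Davenport
  have hCD : min p (A.card + B.card - 1) ≤ (A + B).card := ZMod.cauchy_davenport hpp hAne hBne
  have hpq : (p : ℝ≥0∞) * q = 1 := by
    rw [hq, ← ENNReal.ofReal_natCast, ← ENNReal.ofReal_mul (by positivity)]
    rw [mul_one_div, div_self hp0.ne', ENNReal.ofReal_one]
  have hqε : q ≤ (ε : ℝ≥0∞) := by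
    rw [hq, ← ENNReal.ofReal_coe_nnreal]
    exact ENNReal.ofReal_le_ofReal hpε
  rcases min_le_iff.mp hCD with hcase | hcase
  · -- p ≤ (A+B).card : volume U ≥ 1
    have h1 : (1 : ℝ≥0∞) ≤ volume U := by
      calc (1 : ℝ≥0∞) = p * q := hpq.symm
        _ ≤ ((A + B).card : ℝ≥0∞) * q := by
            apply mul_le_mul_left
            exact_mod_cast hcase
        _ ≤ volume U := hUge
    calc min 1 (volume K + volume L) ≤ 1 := min_le_left _ _
      _ ≤ volume U := h1
      _ ≤ volume U + ε := le_self_add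
  · -- A.card + B.card - 1 ≤ (A+B).card
    have hcard : A.card + B.card ≤ (A + B).card + 1 := by
      have h1 : 1 ≤ A.card := hAne.card_pos
      omega
    calc min 1 (volume K + volume L) ≤ volume K + volume L := min_le_right _ _
      _ ≤ A.card * q + B.card * q := add_le_add hAK hBL
      _ = ((A.card + B.card : ℕ) : ℝ≥0∞) * q := by push_cast; ring
      _ ≤ (((A + B).card + 1 : ℕ) : ℝ≥0∞) * q := by
          apply mul_le_mul_left
          exact_mod_cast hcard
      _ = ((A + B).card : ℝ≥0∞) * q + q := by push_cast; ring
      _ ≤ volume U + ε := add_le_add hUge hqε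

/-! ### Transfer to the multiplicative circle -/

noncomputable def ψ : 𝕋 ≃ₜ Circle := AddCircle.homeomorphCircle one_ne_zero

lemma ψ_apply (x : 𝕋) : ψ x = AddCircle.toCircle x := AddCircle.homeomorphCircle_apply _ _

lemma ψ_add (x y : 𝕋) : ψ (x + y) = ψ x * ψ y := by
  rw [ψ_apply, ψ_apply, ψ_apply, AddCircle.toCircle_add]

/-- The probability Haar measure on the circle, as pushforward of the volume. -/
noncomputable def ν : Measure Circle := Measure.map ψ volume

lemma ν_apply {s : Set Circle} (hs : MeasurableSet s) : ν s = volume (ψ ⁻¹' s) :=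
  Measure.map_apply (ψ.continuous.measurable) hs

instance : IsProbabilityMeasure ν :=
  Measure.isProbabilityMeasure_map (ψ.continuous.measurable.aemeasurable)

instance : ν.IsMulLeftInvariant := by
  constructor
  intro g
  obtain ⟨x₀, rfl⟩ := ψ.surjective g
  rw [ν, Measure.map_map (measurable_const_mul _) ψ.continuous.measurable]
  have hcomp : (fun y => ψ x₀ * y) ∘ ψ = ψ ∘ (fun y => x₀ + y) :=
    funext fun y => (ψ_add x₀ y).symm
  rw [hcomp, ← Measure.map_map ψ.continuous.measurable (measurable_const_add x₀),
    map_add_left_eq_self]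

instance : ν.IsOpenPosMeasure := by
  constructor
  intro W hW hWne
  rw [ν_apply hW.measurableSet]
  exact (hW.preimage ψ.continuous).measure_ne_zero volume
    (hWne.preimage ψ.surjective)

instance : ν.IsHaarMeasure := { }

lemma haar_eq_smul : ∃ d : ℝ≥0∞, 0 < d ∧ d ≤ 1 ∧ ν = d • (Measure.haar : Measure Circle) := by
  set K₀ : TopologicalSpace.PositiveCompacts Circle := Classical.arbitrary _ with hK₀
  refine ⟨ν K₀, ?_, ?_, ?_⟩
  · calc (0 : ℝ≥0∞) < ν (interior K₀) :=
        (isOpen_interior.measure_pos ν K₀.interior_nonempty)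
      _ ≤ ν K₀ := measure_mono interior_subset
  · calc ν K₀ ≤ ν Set.univ := measure_mono (Set.subset_univ _)
      _ = 1 := measure_univ
  · exact Measure.haarMeasure_unique ν K₀

/-- Kemperman for compact subsets of the multiplicative circle, w.r.t. `ν`. -/
theorem kemp_circle_compact (K L : Set Circle) (hK : IsCompact K) (hL : IsCompact L)
    (hKne : K.Nonempty) (hLne : L.Nonempty) :
    min 1 (ν K + ν L) ≤ ν (K * L) := by
  have hKLc : IsCompact (K * L) := hK.mul hL
  have hpre : ψ ⁻¹' (K * L) = (ψ ⁻¹' K) + (ψ ⁻¹' L) := by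
    ext x
    constructor
    · intro hx
      obtain ⟨a, ha, b, hb, hab⟩ := hx
      refine ⟨ψ.symm a, ?_, ψ.symm b, ?_, ?_⟩
      · simpa [Homeomorph.apply_symm_apply] using ha
      · simpa [Homeomorph.apply_symm_apply] using hb
      · apply ψ.injective
        rw [ψ_add]
        simp only [Homeomorph.apply_symm_apply]
        exact hab
    · rintro ⟨u, hu, v, hv, rfl⟩
      exact ⟨ψ u, hu, ψ v, hv, (ψ_add u v).symm⟩
  rw [ν_apply hK.isClosed.measurableSet, ν_apply hL.isClosed.measurableSet,
    ν_apply hKLc.isClosed.measurableSet, hpre]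
  exact kemp_add _ _ (ψ.isCompact_preimage.mpr hK) (ψ.isCompact_preimage.mpr hL)
    (hKne.preimage ψ.surjective) (hLne.preimage ψ.surjective)

end KempermanAux

open KempermanAux

/-- Kemperman's theorem for the circle group: for nonempty measurable `A, B ⊆ S¹`,
the inner measure of the product set `A * B` is at least `min 1 (μ A + μ B)`,
where the inner measure is the supremum of the Haar measures of measurable subsets. -/
theorem kemperman_circle
    (A B : Set Circle) (hA : MeasurableSet A) (hB : MeasurableSet B)
    (hAne : A.Nonempty) (hBne : B.Nonempty) :
    min 1 ((Measure.haar : Measure Circle) A + (Measure.haar : Measure Circle) B) ≤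
      ⨆ (C : Set Circle) (_ : MeasurableSet C) (_ : C ⊆ A * B),
        (Measure.haar : Measure Circle) C := by
  classical
  obtain ⟨d, hd0, hd1, hdν⟩ := haar_eq_smul
  have hdtop : d ≠ ⊤ := (hd1.trans_lt ENNReal.one_lt_top).ne
  have hν_eq : ∀ s : Set Circle, ν s = d * (Measure.haar : Measure Circle) s := fun s => by
    rw [hdν]; rfl
  set S := ⨆ (C : Set Circle) (_ : MeasurableSet C) (_ : C ⊆ A * B),
        (Measure.haar : Measure Circle) C with hS
  set Sν := ⨆ (C : Set Circle) (_ : MeasurableSet C) (_ : C ⊆ A * B), ν C with hSν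
  have hSd : Sν = d * S := by
    rw [hS, hSν, ENNReal.mul_iSup]
    refine iSup_congr fun C => ?_
    rw [ENNReal.mul_iSup]
    refine iSup_congr fun hC => ?_
    rw [ENNReal.mul_iSup]
    exact iSup_congr fun h => hν_eq C
  have key : min 1 (ν A + ν B) ≤ Sν := by
    refine ENNReal.le_of_forall_pos_le_add fun ε hε _ => ?_
    have hε2 : ((ε : ℝ≥0∞) / 2) ≠ 0 := by
      simp only [ne_eq, ENNReal.div_eq_zero_iff]
      push_neg
      exact ⟨by exact_mod_cast hε.ne', by norm_num⟩
    obtain ⟨K', hK'A, hK'c, hK'm⟩ := hA.exists_isCompact_lt_add (measure_ne_top ν A) hε2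
    obtain ⟨L', hL'B, hL'c, hL'm⟩ := hB.exists_isCompact_lt_add (measure_ne_top ν B) hε2
    obtain ⟨a, ha⟩ := hAne
    obtain ⟨b, hb⟩ := hBne
    set K : Set Circle := insert a K' with hKdef
    set L : Set Circle := insert b L' with hLdef
    have hKc : IsCompact K := hK'c.insert a
    have hLc : IsCompact L := hL'c.insert b
    have hKA : K ⊆ A := Set.insert_subset ha hK'A
    have hLB : L ⊆ B := Set.insert_subset hb hL'B
    have hKLsub : K * L ⊆ A * B := Set.mul_subset_mul hKA hLB
    have hKLm : MeasurableSet (K * L) := (hKc.mul hLc).isClosed.measurableSet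
    have step : min 1 (ν K + ν L) ≤ ν (K * L) :=
      kemp_circle_compact K L hKc hLc ⟨a, Set.mem_insert _ _⟩ ⟨b, Set.mem_insert _ _⟩
    have hsup : ν (K * L) ≤ Sν := by
      have h := le_iSup (fun C : Set Circle =>
        ⨆ (_ : MeasurableSet C) (_ : C ⊆ A * B), ν C) (K * L)
      rw [iSup_pos hKLm, iSup_pos hKLsub] at h
      exact h.trans_eq hSν.symm
    have hνK : ν A ≤ ν K + (ε : ℝ≥0∞) / 2 :=
      le_trans hK'm.le (add_le_add_left (measure_mono (Set.subset_insert a K')) _)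
    have hνL : ν B ≤ ν L + (ε : ℝ≥0∞) / 2 :=
      le_trans hL'm.le (add_le_add_left (measure_mono (Set.subset_insert b L')) _)
    calc min 1 (ν A + ν B) ≤ min 1 ((ν K + ν L) + (ε : ℝ≥0∞)) := by
          apply min_le_min le_rfl
          calc ν A + ν B ≤ (ν K + (ε : ℝ≥0∞) / 2) + (ν L + (ε : ℝ≥0∞) / 2) := add_le_add hνK hνL
            _ = (ν K + ν L) + ((ε : ℝ≥0∞) / 2 + (ε : ℝ≥0∞) / 2) := by ring
            _ = (ν K + ν L) + (ε : ℝ≥0∞) := by rw [ENNReal.add_halves]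
      _ ≤ min 1 (ν K + ν L) + (ε : ℝ≥0∞) := by
          rcases le_total (1 : ℝ≥0∞) (ν K + ν L) with h | h
          · rw [min_eq_left (h.trans le_self_add), min_eq_left h]
            exact le_self_add
          · rw [min_eq_right h]
            exact min_le_right _ _
      _ ≤ ν (K * L) + (ε : ℝ≥0∞) := add_le_add_left step _
      _ ≤ Sν + (ε : ℝ≥0∞) := add_le_add_left hsup _
  rw [← ENNReal.mul_le_mul_iff_right hd0.ne' hdtop]
  calc d * min 1 ((Measure.haar : Measure Circle) A + (Measure.haar : Measure Circle) B)
      = min (d * 1) (d * ((Measure.haar : Measure Circle) A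
        + (Measure.haar : Measure Circle) B)) := by
        rcases le_total (1 : ℝ≥0∞) ((Measure.haar : Measure Circle) A
            + (Measure.haar : Measure Circle) B) with h | h
        · rw [min_eq_left h, min_eq_left (mul_le_mul_right h d)]
        · rw [min_eq_right h, min_eq_right (mul_le_mul_right h d)]
    _ ≤ min 1 (ν A + ν B) := by
        apply min_le_min
        · rw [mul_one]; exact hd1
        · rw [hν_eq A, hν_eq B, mul_add]
    _ ≤ Sν := key
    _ = d * S := hSd
end

section
/- Let a, b, c, d ∈ ℂ with a + b = c + d, a ≠ b, and (a − b)² = e^{iθ}·(c − d)² for some θ ∈ (0, π). Then a, c, b, d form a rectangle whose aspect ratio (ratio of shorter side to longer side, or of designated sides) equals tan(θ/4) or cot(θ/4); in particular, treating aspect ratio as an unordered ratio, the rectangle has aspect ratio tan(θ/4) up to taking reciprocal. -/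
open Real

/-- If `[a,b]` and `[c,d]` have the same midpoint and `(a-b)² = e^{iθ}(c-d)²` with
`θ ∈ (0, π)`, then `a, c, b, d` (in cyclic order) form a rectangle whose aspect
ratio is `tan (θ/4)` up to taking reciprocal. -/
theorem rectangle_aspect_ratio_of_rotated_squared_difference
    (a b c d : ℂ) (θ : ℝ) (hθ : θ ∈ Set.Ioo 0 π)
    (hmid : a + b = c + d) (hab : a ≠ b)
    (hrot : (a - b) ^ 2 = Complex.exp (θ * Complex.I) * (c - d) ^ 2) :
    (((c - a) * (starRingEnd ℂ) (b - c)).re = 0 ∧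
     ((b - c) * (starRingEnd ℂ) (d - b)).re = 0 ∧
     ((d - b) * (starRingEnd ℂ) (a - d)).re = 0 ∧
     ((a - d) * (starRingEnd ℂ) (c - a)).re = 0) ∧
    (dist a c / dist c b = Real.tan (θ / 4) ∨
     dist c b / dist a c = Real.tan (θ / 4)) := by
  obtain ⟨hθ0, hθπ⟩ := hθ
  have hd : d = a + b - c := by linear_combination -hmid
  subst hd
  have habs : ‖Complex.exp (↑θ * Complex.I)‖ = 1 := by
    rw [Complex.norm_exp]; simp
  -- equal diagonals
  have hns : Complex.normSq (a - b) = Complex.normSq (c - (a + b - c)) := by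
    have h := congrArg Complex.normSq hrot
    rw [Complex.normSq_mul, ← Complex.sq_norm (Complex.exp _), habs,
      map_pow, map_pow] at h
    simp only [one_pow, one_mul] at h
    nlinarith [Complex.normSq_nonneg (a - b), Complex.normSq_nonneg (c - (a + b - c))]
  have hns' : (a-b).re^2 + (a-b).im^2 = (c - (a+b-c)).re^2 + (c - (a+b-c)).im^2 := by
    simpa [Complex.normSq_apply, sq] using hns
  simp only [Complex.sub_re, Complex.sub_im, Complex.add_re, Complex.add_im] at hns'
  constructor
  · refine ⟨?_, ?_, ?_, ?_⟩ <;>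
    · simp only [Complex.mul_re, Complex.sub_re, Complex.sub_im, Complex.add_re,
        Complex.add_im, Complex.conj_re, Complex.conj_im]
      first
      | linear_combination hns'/4
      | linear_combination -hns'/4
  · set C := c - (a + b - c) with hCdef
    set e := Complex.exp (↑(θ/2) * Complex.I) with hedef
    have hexp : Complex.exp (↑θ * Complex.I) = e ^ 2 := by
      rw [hedef, sq, ← Complex.exp_add]
      congr 1
      push_cast
      ring
    have hC : C ≠ 0 := by
      intro h
      rw [h] at hrot
      simp only [ne_eq, OfNat.ofNat_ne_zero, not_false_eq_true, zero_pow, mul_zero,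
        pow_eq_zero_iff] at hrot
      exact hab (sub_eq_zero.mp hrot)
    have hrot2 : (a - b) ^ 2 = e ^ 2 * C ^ 2 := by rw [← hexp]; exact hrot
    have hfac : ((a - b) - e * C) * ((a - b) + e * C) = 0 := by linear_combination hrot2
    have sinpos : 0 < Real.sin (θ/4) :=
      Real.sin_pos_of_pos_of_lt_pi (by linarith) (by linarith [Real.pi_pos])
    have cospos : 0 < Real.cos (θ/4) := by
      apply Real.cos_pos_of_mem_Ioo
      constructor <;> [linarith [Real.pi_pos]; linarith [Real.pi_pos]]
    have hc2 := Real.cos_sq (θ/4)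
    rw [show 2 * (θ/4) = θ/2 by ring] at hc2
    have hs2 := Real.sin_sq_add_cos_sq (θ/4)
    have hem : ‖e - 1‖ = 2 * Real.sin (θ/4) := by
      rw [Complex.norm_def, Complex.normSq_apply]
      simp only [hedef, Complex.sub_re, Complex.sub_im, Complex.exp_ofReal_mul_I_re,
        Complex.exp_ofReal_mul_I_im, Complex.one_re, Complex.one_im, sub_zero]
      rw [show (Real.cos (θ/2) - 1) * (Real.cos (θ/2) - 1) + Real.sin (θ/2) * Real.sin (θ/2)
            = (2 * Real.sin (θ/4)) ^ 2 by nlinarith [hc2, hs2, Real.sin_sq_add_cos_sq (θ/2)]]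
      exact Real.sqrt_sq (by positivity)
    have hep : ‖e + 1‖ = 2 * Real.cos (θ/4) := by
      rw [Complex.norm_def, Complex.normSq_apply]
      simp only [hedef, Complex.add_re, Complex.add_im, Complex.exp_ofReal_mul_I_re,
        Complex.exp_ofReal_mul_I_im, Complex.one_re, Complex.one_im, add_zero]
      rw [show (Real.cos (θ/2) + 1) * (Real.cos (θ/2) + 1) + Real.sin (θ/2) * Real.sin (θ/2)
            = (2 * Real.cos (θ/4)) ^ 2 by nlinarith [hc2, hs2, Real.sin_sq_add_cos_sq (θ/2)]]
      exact Real.sqrt_sq (by positivity)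
    have hK : 0 < ‖C‖ := by
      rwa [norm_pos_iff]
    rcases mul_eq_zero.mp hfac with h | h
    · left
      have e1 : a - c = (e - 1) * C / 2 := by
        first
        | linear_combination h/2 + hCdef/2
        | linear_combination h/2 - hCdef/2
        | linear_combination -h/2 + hCdef/2
        | linear_combination -h/2 - hCdef/2
      have e2 : c - b = (e + 1) * C / 2 := by
        first
        | linear_combination h/2 + hCdef/2
        | linear_combination h/2 - hCdef/2
        | linear_combination -h/2 + hCdef/2
        | linear_combination -h/2 - hCdef/2
      rw [Complex.dist_eq, Complex.dist_eq, e1, e2, norm_div, norm_div, norm_mul, norm_mul,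
        hem, hep, Complex.norm_two, Real.tan_eq_sin_div_cos]
      field_simp
    · right
      have e1 : b - c = (e - 1) * C / 2 := by
        first
        | linear_combination h/2 + hCdef/2
        | linear_combination h/2 - hCdef/2
        | linear_combination -h/2 + hCdef/2
        | linear_combination -h/2 - hCdef/2
      have e2 : c - a = (e + 1) * C / 2 := by
        first
        | linear_combination h/2 + hCdef/2
        | linear_combination h/2 - hCdef/2
        | linear_combination -h/2 + hCdef/2
        | linear_combination -h/2 - hCdef/2
      rw [dist_comm c b, dist_comm a c, Complex.dist_eq, Complex.dist_eq, e1, e2,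
        norm_div, norm_div, norm_mul, norm_mul, hem, hep, Complex.norm_two,
        Real.tan_eq_sin_div_cos]
      field_simp
end
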